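/- Let m : (-1,1) → (0,∞) be continuous with m monotonically decreasing on [1 - 2^{-n₀}, 1) for some n₀ ∈ ℕ, and suppose m(s) → 0 as s → 1⁻. Define W'(s) = ∫₀ˢ 1/m(τ) dτ. Then m(s)·W'(s) → 0 as s → 1⁻. -/

import Mathlib

open Set Filter

/-- For a degenerate mobility m, positive on (-1,1), eventually antitone near 1 and
vanishing as s → 1⁻, the product m(s)·W'(s) tends to 0 as s → 1⁻, where
W'(s) = ∫₀ˢ 1/m(τ) dτ. -/
theorem mobility_entropy_product_vanishes (m : ℝ → ℝ) (n₀ : ℕ)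
    (hcont : ContinuousOn m (Ioo (-1:ℝ) 1))
    (hpos : ∀ s ∈ Ioo (-1:ℝ) 1, 0 < m s)
    (hanti : AntitoneOn m (Ico (1 - (1/2:ℝ) ^ n₀) 1))
    (hlim : Tendsto m (nhdsWithin 1 (Ioo (-1:ℝ) 1)) (nhds 0)) :
    Tendsto (fun s => m s * ∫ τ in (0:ℝ)..s, (m τ)⁻¹)
      (nhdsWithin 1 (Ioo (-1:ℝ) 1)) (nhds 0) := by
  have hinvcont : ContinuousOn (fun τ => (m τ)⁻¹) (Ioo (-1:ℝ) 1) :=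
    hcont.inv₀ (fun τ hτ => (hpos τ hτ).ne')
  set a : ℝ := 1 - (1/2:ℝ) ^ n₀ with ha_def
  have ha0 : 0 ≤ a := by
    have : (1/2:ℝ) ^ n₀ ≤ 1 := pow_le_one₀ (by norm_num) (by norm_num)
    rw [ha_def]; linarith
  have ha1 : a < 1 := by
    have : (0:ℝ) < (1/2:ℝ) ^ n₀ := pow_pos (by norm_num) _
    rw [ha_def]; linarith
  rw [Metric.tendsto_nhds]
  intro ε hε
  set b : ℝ := max a (1 - ε/2) with hb_def
  have hab : a ≤ b := le_max_left _ _
  have hb0 : 0 ≤ b := le_trans ha0 hab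
  have hb1 : b < 1 := max_lt ha1 (by linarith)
  have hbe : 1 - b ≤ ε/2 := by
    have := le_max_right a (1 - ε/2)
    linarith
  set C : ℝ := ∫ τ in (0:ℝ)..b, (m τ)⁻¹ with hC_def
  have hCint : IntervalIntegrable (fun τ => (m τ)⁻¹) MeasureTheory.volume 0 b := by
    apply ContinuousOn.intervalIntegrable
    apply hinvcont.mono
    rw [uIcc_of_le hb0]
    intro x hx
    exact ⟨by linarith [hx.1], lt_of_le_of_lt hx.2 hb1⟩
  have hC0 : 0 ≤ C := by
    apply intervalIntegral.integral_nonneg hb0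
    intro τ hτ
    exact le_of_lt (inv_pos.mpr (hpos τ ⟨by linarith [hτ.1], lt_of_le_of_lt hτ.2 hb1⟩))
  have hδ : 0 < ε / (2 * (C + 1)) := by positivity
  have h1 : ∀ᶠ s in nhdsWithin 1 (Ioo (-1:ℝ) 1), |m s| < ε / (2 * (C + 1)) := by
    have := Metric.tendsto_nhds.mp hlim _ hδ
    simpa [Real.dist_eq] using this
  have h2 : ∀ᶠ s in nhdsWithin 1 (Ioo (-1:ℝ) 1), b < s :=
    (eventually_gt_nhds hb1).filter_mono nhdsWithin_le_nhds
  have h3 : ∀ᶠ s in nhdsWithin 1 (Ioo (-1:ℝ) 1), s ∈ Ioo (-1:ℝ) 1 :=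
    eventually_mem_nhdsWithin
  filter_upwards [h1, h2, h3] with s hms hbs hsI
  have hs1 : s < 1 := hsI.2
  have hmspos : 0 < m s := hpos s hsI
  have hmsε : m s < ε / (2 * (C + 1)) := lt_of_le_of_lt (le_abs_self _) hms
  have hIint : IntervalIntegrable (fun τ => (m τ)⁻¹) MeasureTheory.volume b s := by
    apply ContinuousOn.intervalIntegrable
    apply hinvcont.mono
    rw [uIcc_of_le hbs.le]
    intro x hx
    exact ⟨by linarith [hx.1], lt_of_le_of_lt hx.2 hs1⟩
  -- split integral
  have hsplit : (∫ τ in (0:ℝ)..s, (m τ)⁻¹) = C + ∫ τ in b..s, (m τ)⁻¹ := by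
    rw [hC_def, intervalIntegral.integral_add_adjacent_intervals hCint hIint]
  -- bound the tail integral
  have htail : (∫ τ in b..s, (m τ)⁻¹) ≤ (s - b) * (m s)⁻¹ := by
    have : (∫ τ in b..s, (m τ)⁻¹) ≤ ∫ _ in b..s, (m s)⁻¹ := by
      apply intervalIntegral.integral_mono_on hbs.le hIint intervalIntegrable_const
      intro τ hτ
      have hτI : τ ∈ Ico a 1 := ⟨le_trans hab hτ.1, lt_of_le_of_lt hτ.2 hs1⟩
      have hsIa : s ∈ Ico a 1 := ⟨le_trans hab hbs.le, hs1⟩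
      have hml : m s ≤ m τ := hanti hτI hsIa hτ.2
      exact inv_anti₀ hmspos hml
    simpa using this
  have htail0 : 0 ≤ ∫ τ in b..s, (m τ)⁻¹ := by
    apply intervalIntegral.integral_nonneg hbs.le
    intro τ hτ
    exact le_of_lt (inv_pos.mpr (hpos τ ⟨by linarith [hτ.1], lt_of_le_of_lt hτ.2 hs1⟩))
  have key : m s * ∫ τ in (0:ℝ)..s, (m τ)⁻¹ < ε := by
    rw [hsplit, mul_add]
    have e1 : m s * C < ε / 2 := by
      calc m s * C ≤ m s * (C + 1) := by nlinarith
        _ < ε / (2 * (C + 1)) * (C + 1) := by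
            apply mul_lt_mul_of_pos_right hmsε; linarith
        _ = ε / 2 := by field_simp
    have e2 : m s * ∫ τ in b..s, (m τ)⁻¹ ≤ s - b := by
      calc m s * ∫ τ in b..s, (m τ)⁻¹ ≤ m s * ((s - b) * (m s)⁻¹) :=
            mul_le_mul_of_nonneg_left htail hmspos.le
        _ = s - b := by field_simp
    have : s - b < ε / 2 := by linarith
    linarith
  have knn : 0 ≤ m s * ∫ τ in (0:ℝ)..s, (m τ)⁻¹ := by
    rw [hsplit]
    positivity
  rw [Real.dist_eq, sub_zero, abs_of_nonneg knn]
  exact key
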